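/- Vertex marginals are Fourier pairs (Proposition 2): fix a vertex v₀ ∈ V, and suppose Z_p ≠ 0, φ_{v₀}(a) ≠ 0 for all a, and φ̃_{v₀}(a) ≠ 0 for all a. Define the primal vertex marginal π_p(a) = (Σ_{x : x(v₀) = a} Π_{e∈E} ψ_e(y_e(x)) Π_{v∈V} φ_v(x(v)))/Z_p and the dual vertex marginal π_d(a) = (Σ_{ỹ : x̃_{v₀}(ỹ) = a} Π_{e∈E} ψ̃_e(ỹ(e)) Π_{v∈V} φ̃_v(x̃_v(ỹ)))/Z_d. Then for every a ∈ ZMod q: π_p(a)/φ_{v₀}(a) = Σ_{a'∈ZMod q} (π_d(a')/φ̃_{v₀}(a')) · ω^{a·a'}. -/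

import Mathlib

open scoped BigOperators

/-- The character value ω^{a·b} = exp(−2πi·a·b/q). -/
noncomputable def omegaPow (q : ℕ) (a b : ZMod q) : ℂ :=
  Complex.exp (-2 * Real.pi * Complex.I * ((a.val * b.val : ℕ) : ℂ) / (q : ℂ))

/-- The discrete Fourier transform of `f : ZMod q → ℂ`. -/
noncomputable def dft (q : ℕ) [NeZero q] (f : ZMod q → ℂ) (b : ZMod q) : ℂ :=
  ∑ a : ZMod q, f a * omegaPow q a b

/-- The dual vertex variable x̃_v(yt). -/
noncomputable def dualX {V E : Type*} [Fintype E] [DecidableEq V]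
    (s t : E → V) (q : ℕ) (yt : E → ZMod q) (v : V) : ZMod q :=
  -((∑ e ∈ Finset.univ.filter (fun e => s e = v), yt e) -
     ∑ e ∈ Finset.univ.filter (fun e => t e = v), yt e)

/-- The primal partition function. -/
noncomputable def Zp {V E : Type*} [Fintype V] [Fintype E] [DecidableEq V]
    (s t : E → V) (q : ℕ) [NeZero q]
    (ψ : E → ZMod q → ℂ) (φ : V → ZMod q → ℂ) : ℂ :=
  ∑ x : V → ZMod q, (∏ e : E, ψ e (x (s e) - x (t e))) * ∏ v : V, φ v (x v)

/-- The dual partition function. -/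
noncomputable def Zd {V E : Type*} [Fintype V] [Fintype E] [DecidableEq V] [DecidableEq E]
    (s t : E → V) (q : ℕ) [NeZero q]
    (ψ : E → ZMod q → ℂ) (φ : V → ZMod q → ℂ) : ℂ :=
  ∑ yt : E → ZMod q, (∏ e : E, dft q (ψ e) (yt e)) * ∏ v : V, dft q (φ v) (dualX s t q yt v)

open Finset Function

/-!
Expanding every Fourier transform in `Z_d` and summing the characters over `ỹ` (orthogonality)
forces the edge labels of the expansion to be the differences `x (s e) - x (t e)` of a vertex
labelling `x`, because `x̃` is minus the transpose of the incidence map; hence `Z_d = q ^ |E| * Z_p`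
for all factors. Pinning `x v₀ = a` amounts to replacing `φ v₀` by the indicator of `a`, whose
transform is `ω ^ (a · _)`. So the left side is the pinned `Z_p` over `Z_p`, the right side, sorted
by the value `a'` of `x̃ v₀`, is the pinned `Z_d` over `Z_d`, and the duality equates the two ratios.
-/

lemma AddChar.map_sum_eq_prod {A M ι : Type*} [AddCommMonoid A] [CommMonoid M]
    (ψ : AddChar A M) (s : Finset ι) (f : ι → A) : ψ (∑ i ∈ s, f i) = ∏ i ∈ s, ψ (f i) :=
  map_prod ψ.toMonoidHom (fun i => Multiplicative.ofAdd (f i)) s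

lemma AddChar.sum_apply_dotProduct {R R' ι : Type*} [CommRing R] [Fintype R] [DecidableEq R]
    [CommRing R'] [IsDomain R'] [Fintype ι] [DecidableEq ι] {ψ : AddChar R R'}
    (hψ : ψ.IsPrimitive) (d : ι → R) :
    ∑ y : ι → R, ψ (d ⬝ᵥ y) = if d = 0 then (Fintype.card R : R') ^ Fintype.card ι else 0 := by
  simp_rw [dotProduct, AddChar.map_sum_eq_prod]
  rw [← Fintype.prod_sum fun i r => ψ (d i * r)]
  simp_rw [fun i r => mul_comm (d i) r, AddChar.sum_mulShift _ hψ, Nat.cast_ite, Nat.cast_zero,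
    Fintype.prod_ite_zero, prod_const, card_univ, funext_iff]
  rfl

lemma omegaPow_eq_stdAddChar {q : ℕ} [NeZero q] (a b : ZMod q) :
    omegaPow q a b = ZMod.stdAddChar (-(a * b)) := by
  have hcast : -(a * b) = ((-(a.val * b.val : ℕ) : ℤ) : ZMod q) := by
    push_cast
    simp
  rw [hcast, ZMod.stdAddChar_coe, omegaPow]
  congr 1
  push_cast
  ring

lemma dft_single {q : ℕ} [NeZero q] (a : ZMod q) : dft q (Pi.single a 1) = omegaPow q a := by
  ext b
  simp [dft, Pi.single_apply]

lemma prod_dft {ι : Type*} [Fintype ι] [DecidableEq ι] {q : ℕ} [NeZero q]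
    (f : ι → ZMod q → ℂ) (y : ι → ZMod q) :
    ∏ i, dft q (f i) (y i) = ∑ b : ι → ZMod q, (∏ i, f i (b i)) * ZMod.stdAddChar (-(b ⬝ᵥ y)) := by
  simp_rw [dft, omegaPow_eq_stdAddChar, Fintype.prod_sum, dotProduct, ← sum_neg_distrib,
    AddChar.map_sum_eq_prod, ← prod_mul_distrib]

lemma dotProduct_dualX {V E : Type*} [Fintype V] [Fintype E] [DecidableEq V] (s t : E → V)
    {q : ℕ} (c : V → ZMod q) (y : E → ZMod q) :
    c ⬝ᵥ dualX s t q y = -((fun e => c (s e) - c (t e)) ⬝ᵥ y) := by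
  have sum_fiber (u : E → V) : ∑ v, c v * ∑ e with u e = v, y e = ∑ e, c (u e) * y e := by
    simp_rw [mul_sum, sum_filter]
    rw [sum_comm]
    simp
  simp only [dotProduct, dualX, mul_neg, mul_sub, sum_neg_distrib, sum_sub_distrib, sum_fiber,
    sub_mul]

theorem Zd_eq_pow_mul_Zp {V E : Type*} [Fintype V] [Fintype E] [DecidableEq V] [DecidableEq E]
    (s t : E → V) (q : ℕ) [NeZero q] (ψ : E → ZMod q → ℂ) (φ : V → ZMod q → ℂ) :
    Zd s t q ψ φ = (q : ℂ) ^ Fintype.card E * Zp s t q ψ φ := by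
  let δ (c : V → ZMod q) (e : E) : ZMod q := c (s e) - c (t e)
  have phase (b : E → ZMod q) (c : V → ZMod q) (y : E → ZMod q) :
      ZMod.stdAddChar (-(b ⬝ᵥ y)) * ZMod.stdAddChar (-(c ⬝ᵥ dualX s t q y)) =
        ZMod.stdAddChar ((δ c - b) ⬝ᵥ y) := by
    rw [← AddChar.map_add_eq_mul, dotProduct_dualX, sub_dotProduct, neg_neg, neg_add_eq_sub]
  calc Zd s t q ψ φ
      = ∑ b : E → ZMod q, ∑ c : V → ZMod q, (∏ e, ψ e (b e)) * (∏ v, φ v (c v)) *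
          ∑ y : E → ZMod q, ZMod.stdAddChar ((δ c - b) ⬝ᵥ y) := by
        simp_rw [Zd, prod_dft, sum_mul_sum, mul_sum, ← phase]
        rw [sum_comm]
        refine sum_congr rfl fun b _ => ?_
        rw [sum_comm]
        exact sum_congr rfl fun c _ => sum_congr rfl fun y _ => by ring
    _ = ∑ c : V → ZMod q, (q : ℂ) ^ Fintype.card E * ((∏ e, ψ e (δ c e)) * ∏ v, φ v (c v)) := by
        simp_rw [AddChar.sum_apply_dotProduct (ZMod.isPrimitive_stdAddChar q), sub_eq_zero,
          ZMod.card, mul_ite, mul_zero]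
        rw [sum_comm]
        simp_rw [Fintype.sum_ite_eq, mul_comm]
    _ = (q : ℂ) ^ Fintype.card E * Zp s t q ψ φ := by rw [Zp, mul_sum]

lemma prod_apply_update {V α M : Type*} [Fintype V] [DecidableEq V] [CommMonoid M]
    (F : V → α → M) (φ : V → α) (v₀ : V) (g : α) :
    ∏ v, F v (update φ v₀ g v) = F v₀ g * ∏ v ∈ univ.erase v₀, F v (φ v) := by
  rw [← mul_prod_erase univ _ (mem_univ v₀), update_self]
  exact congrArg _ <| prod_congr rfl fun v hv => by rw [update_of_ne (ne_of_mem_erase hv)]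

section Pinning

variable {V E : Type*} [Fintype V] [Fintype E] [DecidableEq V]
  (s t : E → V) (q : ℕ) [NeZero q] (ψ : E → ZMod q → ℂ) (φ : V → ZMod q → ℂ) (v₀ : V)

lemma sum_filter_eq_mul_Zp_update (a : ZMod q) :
    ∑ x ∈ univ.filter (fun x : V → ZMod q => x v₀ = a),
        (∏ e, ψ e (x (s e) - x (t e))) * ∏ v, φ v (x v) =
      φ v₀ a * Zp s t q ψ (update φ v₀ (Pi.single a 1)) := by
  rw [Zp, mul_sum, sum_filter]
  refine sum_congr rfl fun x _ => ?_
  rw [prod_apply_update (fun v (h : ZMod q → ℂ) => h (x v)),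
    ← mul_prod_erase univ (fun v => φ v (x v)) (mem_univ v₀)]
  by_cases hx : x v₀ = a
  · simp only [hx, if_pos, Pi.single_eq_same, one_mul]
    ring
  · simp [hx]

lemma Zd_update_single [DecidableEq E] (hφd : ∀ b, dft q (φ v₀) b ≠ 0) (a : ZMod q) :
    Zd s t q ψ (update φ v₀ (Pi.single a 1)) =
      ∑ a', (∑ yt ∈ univ.filter (fun yt : E → ZMod q => dualX s t q yt v₀ = a'),
          (∏ e, dft q (ψ e) (yt e)) * ∏ v, dft q (φ v) (dualX s t q yt v)) /
        dft q (φ v₀) a' * omegaPow q a a' := by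
  rw [Zd, ← sum_fiberwise univ (fun yt => dualX s t q yt v₀)]
  refine sum_congr rfl fun a' _ => ?_
  rw [sum_div, sum_mul]
  refine sum_congr rfl fun yt hyt => ?_
  rw [prod_apply_update (fun v h => dft q h (dualX s t q yt v)), dft_single,
    ← mul_prod_erase univ (fun v => dft q (φ v) (dualX s t q yt v)) (mem_univ v₀),
    (mem_filter.1 hyt).2]
  field_simp [hφd a']

end Pinning

theorem vertex_marginals_fourier_pair_general {V E : Type*} [Fintype V] [Fintype E]
    [DecidableEq V] [DecidableEq E]
    (s t : E → V) (q : ℕ) [NeZero q]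
    (ψ : E → ZMod q → ℂ) (φ : V → ZMod q → ℂ) (v₀ : V)
    (hφ : ∀ a : ZMod q, φ v₀ a ≠ 0) (hφd : ∀ a : ZMod q, dft q (φ v₀) a ≠ 0)
    (a : ZMod q) :
    ((∑ x ∈ Finset.univ.filter (fun x : V → ZMod q => x v₀ = a),
        (∏ e : E, ψ e (x (s e) - x (t e))) * ∏ v : V, φ v (x v)) / Zp s t q ψ φ) / φ v₀ a =
      ∑ a' : ZMod q,
        (((∑ yt ∈ Finset.univ.filter (fun yt : E → ZMod q => dualX s t q yt v₀ = a'),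
            (∏ e : E, dft q (ψ e) (yt e)) * ∏ v : V, dft q (φ v) (dualX s t q yt v)) /
              Zd s t q ψ φ) / dft q (φ v₀) a') * omegaPow q a a' := by
  set φa := update φ v₀ (Pi.single a 1)
  have hq : (q : ℂ) ^ Fintype.card E ≠ 0 := pow_ne_zero _ (Nat.cast_ne_zero.2 (NeZero.ne q))
  calc _ = Zp s t q ψ φa / Zp s t q ψ φ := by
        rw [sum_filter_eq_mul_Zp_update, mul_div_assoc, mul_div_cancel_left₀ _ (hφ a)]
    _ = Zd s t q ψ φa / Zd s t q ψ φ := by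
        rw [Zd_eq_pow_mul_Zp, Zd_eq_pow_mul_Zp, mul_div_mul_left _ _ hq]
    _ = _ := by
        rw [Zd_update_single s t q ψ φ v₀ hφd, sum_div]
        exact sum_congr rfl fun a' _ => by ring

/-- Proposition 2: the primal and dual vertex marginals, each divided by the corresponding
vertex factor, are discrete Fourier transform pairs. -/
theorem vertex_marginals_fourier_pair {V E : Type*} [Fintype V] [Fintype E]
    [DecidableEq V] [DecidableEq E]
    (s t : E → V) (q : ℕ) [NeZero q]
    (ψ : E → ZMod q → ℂ) (φ : V → ZMod q → ℂ) (v₀ : V)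
    (hZp : Zp s t q ψ φ ≠ 0)
    (hφ : ∀ a : ZMod q, φ v₀ a ≠ 0) (hφd : ∀ a : ZMod q, dft q (φ v₀) a ≠ 0)
    (a : ZMod q) :
    ((∑ x ∈ Finset.univ.filter (fun x : V → ZMod q => x v₀ = a),
        (∏ e : E, ψ e (x (s e) - x (t e))) * ∏ v : V, φ v (x v)) / Zp s t q ψ φ) / φ v₀ a =
      ∑ a' : ZMod q,
        (((∑ yt ∈ Finset.univ.filter (fun yt : E → ZMod q => dualX s t q yt v₀ = a'),
            (∏ e : E, dft q (ψ e) (yt e)) * ∏ v : V, dft q (φ v) (dualX s t q yt v)) /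
              Zd s t q ψ φ) / dft q (φ v₀) a') * omegaPow q a a' :=
  vertex_marginals_fourier_pair_general s t q ψ φ v₀ hφ hφd a
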